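/- Let J be an ideal of a Noetherian ring R with J^{(n)} = J^n for all n ≥ 0 (symbolic powers equal ordinary powers). Then Ass(J^n/J^{n+1}) ⊆ Min(R/J) for every n ≥ 0, and consequently the associated graded ring G(J) = ⊕_{n≥0} J^n/J^{n+1} is torsion-free as an R/J-module. -/

import Mathlib

open IsLocalRing Filter Asymptotics

noncomputable section

/-- Minimal number of generators of a module. -/
noncomputable def muMod (R : Type*) [Semiring R] (M : Type*) [AddCommMonoid M] [Module R M] : ℕ :=
  sInf {n : ℕ | ∃ s : Finset M, s.card = n ∧ Submodule.span R (s : Set M) = ⊤}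

/-- The length of a module, as the Krull dimension of its lattice of submodules. -/
noncomputable def lengthM (R : Type*) [Semiring R] (M : Type*) [AddCommMonoid M] [Module R M] :
    WithBot ℕ∞ :=
  Order.krullDim (Submodule R M)

/-- The length of a module, as an extended nonnegative real. -/
noncomputable def lenE (R : Type*) [Semiring R] (M : Type*) [AddCommMonoid M] [Module R M] :
    ENNReal :=
  WithTop.map (fun n : ℕ => (n : NNReal)) (WithBot.unbotD 0 (lengthM R M))

/-- The Hilbert–Samuel multiplicity `e(M) = lim r! λ(M/𝔪ⁿM)/nʳ` of a module `M`
whose dimension is `r`, over a Noetherian local ring. -/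
noncomputable def eMult (R : Type*) [CommRing R] [IsLocalRing R] (M : Type*) [AddCommGroup M]
    [Module R M] (r : ℕ) : ℝ :=
  (Filter.limsup (fun n : ℕ =>
      (Nat.factorial r : ENNReal) * lenE R (M ⧸ ((maximalIdeal R ^ n) • (⊤ : Submodule R M)))
        / (n : ENNReal) ^ r) Filter.atTop).toReal

/-- The (Krull) dimension of a module, i.e. `dim R/ann M`. -/
noncomputable def dimMod (R : Type*) [CommRing R] (M : Type*) [AddCommGroup M] [Module R M] :
    WithBot ℕ∞ :=
  ringKrullDim (R ⧸ Module.annihilator R M)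

/-- The depth of a module over a local ring: the longest length of a regular sequence on `M`
consisting of elements of the maximal ideal. -/
noncomputable def depthM (R : Type*) [CommRing R] [IsLocalRing R] (M : Type*) [AddCommGroup M]
    [Module R M] : ℕ :=
  sSup {n : ℕ | ∃ rs : List R, rs.length = n ∧ (∀ r ∈ rs, r ∈ maximalIdeal R) ∧
    RingTheory.Sequence.IsRegular M rs}

/-- The zeroth local cohomology `H⁰_𝔪(M)`, i.e. the `𝔪`-torsion submodule of `M`. -/
noncomputable def H0 (R : Type*) [CommRing R] [IsLocalRing R] (M : Type*) [AddCommGroup M]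
    [Module R M] : Submodule R M :=
  ⨆ n : ℕ, Submodule.torsionBySet R M ((maximalIdeal R ^ n : Ideal R) : Set R)

/-- The analytic spread of a system of ideals `F`, namely
`min {t ∈ ℝ | μ(F n) = O(n^(t-1))}`. -/
noncomputable def spreadOf {R : Type*} [CommRing R] (F : ℕ → Ideal R) : ℝ :=
  sInf {t : ℝ | (fun n : ℕ => (muMod R ↥(F n) : ℝ)) =O[Filter.atTop]
    fun n : ℕ => (n : ℝ) ^ (t - 1)}

/-- The analytic spread `ℓ(I)` of an ideal, via the growth rate of `μ(Iⁿ)`. -/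
noncomputable def aspread {R : Type*} [CommRing R] (I : Ideal R) : ℝ :=
  spreadOf fun n => I ^ n

/-- The `n`-th symbolic power of `I`: the intersection over the minimal primes `p` of `I`
of `Iⁿ R_p ∩ R`. -/
noncomputable def symbPow {R : Type*} [CommRing R] (I : Ideal R) (n : ℕ) : Ideal R :=
  ⨅ (p : Ideal R) (hp : p ∈ I.minimalPrimes),
    haveI : p.IsPrime := hp.1.1
    Ideal.comap (algebraMap R (Localization.AtPrime p))
      (Ideal.map (algebraMap R (Localization.AtPrime p)) (I ^ n))

/-- The symbolic analytic spread `sℓ(I)`, via the growth rate of `μ(I⁽ⁿ⁾)`. -/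
noncomputable def sspread {R : Type*} [CommRing R] (I : Ideal R) : ℝ :=
  spreadOf fun n => symbPow I n

/-- The arithmetic rank of an ideal: the least number of elements generating an ideal
with the same radical. -/
noncomputable def ara {R : Type*} [CommRing R] (I : Ideal R) : ℕ :=
  sInf {u : ℕ | ∃ s : Finset R, s.card = u ∧ (Ideal.span (s : Set R)).radical = I.radical}

/-- The height of an ideal: the infimum of the heights of its minimal primes. -/
noncomputable def heightI {R : Type*} [CommRing R] (I : Ideal R) : ℕ∞ :=
  sInf {h : ℕ∞ | ∃ pp : PrimeSpectrum R, pp.asIdeal ∈ I.minimalPrimes ∧ Order.height pp = h}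

/-- The saturation `(Iⁿ : 𝔪^∞)` of the `n`-th power of `I`. -/
noncomputable def satPow {R : Type*} [CommRing R] [IsLocalRing R] (I : Ideal R) (n : ℕ) :
    Ideal R :=
  ⨆ k : ℕ, Submodule.colon (I ^ n : Ideal R) ((maximalIdeal R ^ k : Ideal R) : Set R)

/-- The integral closure of an ideal `I`, as a set: elements satisfying an equation
`r^k + a₁ r^(k-1) + ⋯ + a_k = 0` with `aᵢ ∈ Iⁱ`. -/
def idealIC {R : Type*} [CommRing R] (I : Ideal R) : Set R :=
  {r | ∃ (k : ℕ) (a : ℕ → R), 0 < k ∧ (∀ i, 1 ≤ i → i ≤ k → a i ∈ I ^ i) ∧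
      r ^ k + ∑ i ∈ Finset.Icc 1 k, a i * r ^ (k - i) = 0}

/-- The quotient module `J/(I ∩ J)`, i.e. `J/I` when `I ≤ J`. -/
abbrev subQuot {R : Type*} [CommRing R] (J I : Ideal R) :=
  ↥J ⧸ Submodule.comap J.subtype I

/-- A local ring is analytically unramified if its completion is reduced. -/
def AnalyticallyUnramified (R : Type*) [CommRing R] [IsLocalRing R] : Prop :=
  IsReduced (AdicCompletion (maximalIdeal R) R)

/-- A local ring is formally equidimensional if every minimal prime of its completion
has the same dimension. -/
def FormallyEquidimensional (R : Type*) [CommRing R] [IsLocalRing R] : Prop :=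
  ∀ p ∈ minimalPrimes (AdicCompletion (maximalIdeal R) R),
    ringKrullDim ((AdicCompletion (maximalIdeal R) R) ⧸ p) =
      ringKrullDim (AdicCompletion (maximalIdeal R) R)

end

section SymbolicPowers

variable {R : Type*} [CommRing R]

theorem IsLocalization.mem_comap_map_of_mul_mem {M : Submonoid R} (S : Type*) [CommRing S]
    [Algebra R S] [IsLocalization M S] {I : Ideal R} {s y : R} (hs : s ∈ M) (h : s * y ∈ I) :
    y ∈ (I.map (algebraMap R S)).comap (algebraMap R S) :=
  (Ideal.unit_mul_mem_iff_mem _ (IsLocalization.map_units S ⟨s, hs⟩)).mp <| by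
    rw [← map_mul]
    exact Ideal.mem_map_of_mem _ h

theorem exists_mem_minimalPrimes_colon_le_of_notMem_symbPow {J : Ideal R} {n : ℕ} {y : R}
    (hy : y ∉ symbPow J n) : ∃ q ∈ J.minimalPrimes, (J ^ n).colon {y} ≤ q := by
  simp only [symbPow, Submodule.mem_iInf, not_forall] at hy
  obtain ⟨q, hq, hyq⟩ := hy
  have : q.IsPrime := hq.1.1
  refine ⟨q, hq, fun a ha ↦ not_not.mp fun haq ↦ hyq ?_⟩
  exact IsLocalization.mem_comap_map_of_mul_mem (M := q.primeCompl) _ haq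
    (by simpa using Submodule.mem_colon_singleton.mp ha)

theorem exists_mem_eq_colon_of_mem_associatedPrimes_subQuot [IsNoetherianRing R]
    {K I p : Ideal R} (hp : p ∈ associatedPrimes R (subQuot K I)) :
    ∃ y ∈ K, p = I.colon {y} := by
  obtain ⟨-, x, hx⟩ := isAssociatedPrime_iff.mp hp
  obtain ⟨⟨y, hyK⟩, rfl⟩ := Submodule.Quotient.mk_surjective _ x
  refine ⟨y, hyK, hx.trans <| Ideal.ext fun r ↦ ?_⟩
  simp only [Submodule.mem_colon_singleton, Submodule.mem_bot, ← Submodule.Quotient.mk_smul,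
    Submodule.Quotient.mk_eq_zero, Submodule.mem_comap]
  rfl

/-- An associated prime `p = (Jⁿ⁺¹ : y)` with `y ∈ Jⁿ` contains `J`, and `y ∉ Jⁿ⁺¹ = J⁽ⁿ⁺¹⁾`
puts it below a minimal prime of `J`; minimality forces equality. -/
theorem associatedPrimes_subQuot_pow_subset_minimalPrimes [IsNoetherianRing R] {J : Ideal R}
    {n : ℕ} (hsymb : symbPow J (n + 1) ≤ J ^ (n + 1)) :
    associatedPrimes R (subQuot (J ^ n) (J ^ (n + 1))) ⊆ J.minimalPrimes := by
  intro p hp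
  have hprime : p.IsPrime := hp.1
  obtain ⟨y, hyJ, rfl⟩ := exists_mem_eq_colon_of_mem_associatedPrimes_subQuot hp
  have hJp : J ≤ (J ^ (n + 1)).colon {y} := fun a ha ↦
    Submodule.mem_colon_singleton.mpr <| by
      rw [smul_eq_mul, pow_succ']
      exact Ideal.mul_mem_mul ha hyJ
  have hy : y ∉ J ^ (n + 1) := fun h ↦ hprime.ne_top <|
    (Ideal.eq_top_iff_one _).mpr <| Submodule.mem_colon_singleton.mpr (by simpa using h)
  obtain ⟨q, hq, hpq⟩ := exists_mem_minimalPrimes_colon_le_of_notMem_symbPow fun h ↦ hy (hsymb h)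
  rwa [le_antisymm hpq (hq.2 ⟨hprime, hJp⟩ hpq)]

end SymbolicPowers

/-- If `J⁽ⁿ⁾ = Jⁿ` for all `n`, then `Ass(Jⁿ/Jⁿ⁺¹) ⊆ Min(R/J)` for every `n`, and the
associated graded ring `G(J) = ⊕ Jⁿ/Jⁿ⁺¹` is torsion-free over `R/J`: every element of `R`
that is a zerodivisor on some graded piece lies in a minimal prime of `J`. -/
theorem stmt8 (R : Type) [CommRing R] [IsNoetherianRing R] (J : Ideal R)
    (hsymb : ∀ n : ℕ, symbPow J n = J ^ n) :
    (∀ n : ℕ, associatedPrimes R (subQuot (J ^ n) (J ^ (n + 1))) ⊆ J.minimalPrimes) ∧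
    (∀ r : R,
      (∃ (n : ℕ) (x : subQuot (J ^ n) (J ^ (n + 1))), x ≠ 0 ∧ r • x = 0) →
      ∃ p ∈ J.minimalPrimes, r ∈ p) := by
  have hass n := associatedPrimes_subQuot_pow_subset_minimalPrimes (hsymb (n + 1)).le
  refine ⟨hass, fun r ⟨n, x, hx, hrx⟩ ↦ ?_⟩
  have hr : r ∈ ⋃ p ∈ associatedPrimes R (subQuot (J ^ n) (J ^ (n + 1))), (p : Set R) := by
    rw [biUnion_associatedPrimes_eq_zero_divisors]
    exact ⟨x, hx, hrx⟩
  obtain ⟨p, hp, hrp⟩ := Set.mem_iUnion₂.mp hr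
  exact ⟨p, hass n hp, hrp⟩
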